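/- Let G=(V,E) be a correlation clustering instance, β∈(0,1), 𝒞 any clustering, k∈[n], and U⊆V with |U|=k. Let f^+_2 = Σ_{u∈U} Σ_{uv∈φ^+_2(u)} x_{uv}. Then there exists a vector c^+_2∈ℝ_{≥0}^{V} such that: (a) f^+_2 ≤ Σ_{r∈V} c^+_2(r)·cost_𝒞(r); (b) c^+_2(r) ≤ (2/β)·|φ^+_2(r)|/d(r) for every r∈V; (c) Σ_{r∈V} c^+_2(r) ≤ (2/β)·Σ_{u∈U} |φ^+_2(u)|/d(u). -/

import Mathlib

open Finset

attribute [local instance] Classical.propDecidable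

noncomputable section

variable {V : Type*}

/-- The neighborhood of `u` in the graph of `+`edges `E` (contains `u` itself,
since `E` contains all self-loops). -/
def Nbr [Fintype V] (E : V → V → Prop) (u : V) : Finset V :=
  Finset.univ.filter (fun v => E u v)

/-- The degree `d(u) = |N(u)|`. -/
def deg [Fintype V] (E : V → V → Prop) (u : V) : ℕ := (Nbr E u).card

/-- `M_{uv} = max (d(u), d(v))`. -/
def Mdeg [Fintype V] (E : V → V → Prop) (u v : V) : ℕ := max (deg E u) (deg E v)

/-- The pruned edge set `E_H = {uv ∈ E : |N(u) Δ N(v)| ≤ β · M_{uv}}`. -/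
def EH [Fintype V] (β : ℝ) (E : V → V → Prop) (u v : V) : Prop :=
  E u v ∧ ((symmDiff (Nbr E u) (Nbr E v)).card : ℝ) ≤ β * (Mdeg E u v : ℝ)

/-- The neighborhood of `u` in the pruned graph `H`. -/
def NH [Fintype V] (β : ℝ) (E : V → V → Prop) (u : V) : Finset V :=
  Finset.univ.filter (fun v => EH β E u v)

/-- The fractional solution: `x_{uu} = 0` and
`x_{uv} = 1 − |N_H(u) ∩ N_H(v)| / M_{uv}` for `u ≠ v`. -/
def xval [Fintype V] (β : ℝ) (E : V → V → Prop) (u v : V) : ℝ :=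
  if u = v then 0 else 1 - ((NH β E u ∩ NH β E v).card : ℝ) / (Mdeg E u v : ℝ)

/-- `cost_𝒞(u)`: the number of pairs incident to `u` in disagreement with respect
to the clustering `C` (given as a labelling function). -/
def costC [Fintype V] {α : Type*} (E : V → V → Prop) (C : V → α) (u : V) : ℕ :=
  (Finset.univ.filter
    (fun v => (E u v ∧ C u ≠ C v) ∨ (¬ E u v ∧ v ≠ u ∧ C u = C v))).card

/-- The top-`k` norm `cost^k_𝒞` of the disagreement vector of the clustering `C`:
the maximum of `∑_{u ∈ T} cost_𝒞(u)` over subsets `T ⊆ V` of size `k`. -/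
def costTopK [Fintype V] {α : Type*} (E : V → V → Prop) (C : V → α) (k : ℕ) : ℕ :=
  (Finset.powersetCard k (Finset.univ : Finset V)).sup (fun T => ∑ u ∈ T, costC E C u)

/-- `φ^+_1(u)`: (other endpoints of) `+`edges incident to `u` that are cut in `𝒞`. -/
def phi1p [Fintype V] {α : Type*} (E : V → V → Prop) (C : V → α) (u : V) : Finset V :=
  Finset.univ.filter (fun v => E u v ∧ C u ≠ C v)

/-- `φ^+_2(u)`: (other endpoints of) `+`edges of `E ∖ E_H` incident to `u` that are
not cut in `𝒞`. -/
def phi2p [Fintype V] {α : Type*} (β : ℝ) (E : V → V → Prop) (C : V → α) (u : V) :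
    Finset V :=
  Finset.univ.filter (fun v => E u v ∧ ¬ EH β E u v ∧ C u = C v)

/-- `φ^+_3(u)`: (other endpoints of) edges of `E_H` incident to `u` that are not cut
in `𝒞` (this includes the self-loop `uu`). -/
def phi3p [Fintype V] {α : Type*} (β : ℝ) (E : V → V → Prop) (C : V → α) (u : V) :
    Finset V :=
  Finset.univ.filter (fun v => EH β E u v ∧ C u = C v)

/-- `φ^-_1(u)`: (other endpoints of) `−`edges incident to `u` that are not cut in `𝒞`. -/
def phi1m [Fintype V] {α : Type*} (E : V → V → Prop) (C : V → α) (u : V) : Finset V :=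
  Finset.univ.filter (fun v => v ≠ u ∧ ¬ E u v ∧ C u = C v)

/-- `φ^-_2(u)`: (other endpoints of) `−`edges incident to `u` that are cut in `𝒞`. -/
def phi2m [Fintype V] {α : Type*} (E : V → V → Prop) (C : V → α) (u : V) : Finset V :=
  Finset.univ.filter (fun v => v ≠ u ∧ ¬ E u v ∧ C u ≠ C v)

section Aux

variable [Fintype V]

lemma deg_pos' (E : V → V → Prop) (hrefl : ∀ u, E u u) (u : V) : 0 < deg E u :=
  Finset.card_pos.mpr ⟨u, by simp [Nbr, hrefl u]⟩

lemma deg_le_Mdeg_left (E : V → V → Prop) (u v : V) : deg E u ≤ Mdeg E u v :=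
  le_max_left _ _

lemma deg_le_Mdeg_right (E : V → V → Prop) (u v : V) : deg E v ≤ Mdeg E u v :=
  le_max_right _ _

lemma EH_comm' (β : ℝ) (E : V → V → Prop) (hsymm : ∀ u v, E u v → E v u) (u v : V) :
    EH β E u v ↔ EH β E v u := by
  unfold EH Mdeg
  rw [symmDiff_comm, max_comm]
  exact ⟨fun ⟨h1, h2⟩ => ⟨hsymm _ _ h1, h2⟩, fun ⟨h1, h2⟩ => ⟨hsymm _ _ h1, h2⟩⟩

lemma phi2p_symm' (β : ℝ) (E : V → V → Prop) (hsymm : ∀ u v, E u v → E v u)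
    {α : Type*} (C : V → α) {u v : V} (h : v ∈ phi2p β E C u) : u ∈ phi2p β E C v := by
  simp only [phi2p, Finset.mem_filter, Finset.mem_univ, true_and] at h ⊢
  obtain ⟨hE, hEH, hC⟩ := h
  exact ⟨hsymm _ _ hE, fun h' => hEH ((EH_comm' β E hsymm u v).mpr h'), hC.symm⟩

lemma not_mem_phi2p_self (β : ℝ) (hβ0 : 0 < β) (E : V → V → Prop) (hrefl : ∀ u, E u u)
    {α : Type*} (C : V → α) (u : V) : u ∉ phi2p β E C u := by
  simp only [phi2p, Finset.mem_filter, Finset.mem_univ, true_and]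
  rintro ⟨hE, hEH, -⟩
  apply hEH
  refine ⟨hrefl u, ?_⟩
  have : symmDiff (Nbr E u) (Nbr E u) = ⊥ := symmDiff_self _
  rw [this]
  simp only [Finset.bot_eq_empty, Finset.card_empty, Nat.cast_zero]
  have hM : 0 < Mdeg E u u := lt_of_lt_of_le (deg_pos' E hrefl u) (deg_le_Mdeg_left E u u)
  positivity

lemma symmDiff_card_le_cost (E : V → V → Prop) (hrefl : ∀ u, E u u)
    {α : Type*} (C : V → α) {u v : V} (hC : C u = C v) :
    (symmDiff (Nbr E u) (Nbr E v)).card ≤ costC E C u + costC E C v := by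
  classical
  set Du := Finset.univ.filter
    (fun w => (E u w ∧ C u ≠ C w) ∨ (¬ E u w ∧ w ≠ u ∧ C u = C w)) with hDu
  set Dv := Finset.univ.filter
    (fun w => (E v w ∧ C v ≠ C w) ∨ (¬ E v w ∧ w ≠ v ∧ C v = C w)) with hDv
  have hsub : symmDiff (Nbr E u) (Nbr E v) ⊆ Du ∪ Dv := by
    intro w hw
    rw [Finset.mem_symmDiff] at hw
    simp only [Nbr, Finset.mem_filter, Finset.mem_univ, true_and] at hw
    rw [Finset.mem_union]
    simp only [hDu, hDv, Finset.mem_filter, Finset.mem_univ, true_and]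
    rcases hw with ⟨hEu, hnEv⟩ | ⟨hEv, hnEu⟩
    · by_cases hCw : C u = C w
      · right; right
        exact ⟨hnEv, fun hwv => hnEv (hwv ▸ hrefl v), hC ▸ hCw⟩
      · left; left; exact ⟨hEu, hCw⟩
    · by_cases hCw : C v = C w
      · left; right
        exact ⟨hnEu, fun hwu => hnEu (hwu ▸ hrefl u), hC.symm ▸ hCw⟩
      · right; left; exact ⟨hEv, hCw⟩
  calc (symmDiff (Nbr E u) (Nbr E v)).card ≤ (Du ∪ Dv).card := Finset.card_le_card hsub
    _ ≤ Du.card + Dv.card := Finset.card_union_le _ _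
    _ = costC E C u + costC E C v := rfl

end Aux

/-- There is a nonnegative coefficient vector `c^+_2` such that
(a) `f^+_2 ≤ Σ_r c^+_2(r)·cost_𝒞(r)`,
(b) `c^+_2(r) ≤ (2/β)·|φ^+_2(r)|/d(r)` for every `r`, and
(c) `Σ_r c^+_2(r) ≤ (2/β)·Σ_{u∈U} |φ^+_2(u)|/d(u)`. -/
theorem exists_coeff_f2p [Fintype V] (E : V → V → Prop)
    (hsymm : ∀ u v, E u v → E v u) (hrefl : ∀ u, E u u)
    (β : ℝ) (hβ0 : 0 < β) (hβ1 : β < 1)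
    {α : Type*} (C : V → α)
    (k : ℕ) (hk1 : 1 ≤ k) (hk2 : k ≤ Fintype.card V)
    (U : Finset V) (hU : U.card = k) :
    ∃ c : V → ℝ, (∀ r, 0 ≤ c r) ∧
      (∑ u ∈ U, ∑ v ∈ phi2p β E C u, xval β E u v
        ≤ ∑ r : V, c r * (costC E C r : ℝ)) ∧
      (∀ r : V, c r ≤ (2 / β) * ((phi2p β E C r).card : ℝ) / (deg E r : ℝ)) ∧
      (∑ r : V, c r ≤ (2 / β) * ∑ u ∈ U, ((phi2p β E C u).card : ℝ) / (deg E u : ℝ)) := by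
  classical
  set g : V → V → V → ℝ := fun u v r =>
    ((if r = u then (1:ℝ) else 0) + (if r = v then (1:ℝ) else 0)) / (β * (Mdeg E u v : ℝ))
    with hg
  have hMpos : ∀ u v : V, (0:ℝ) < β * (Mdeg E u v : ℝ) := by
    intro u v
    have : 0 < Mdeg E u v := lt_of_lt_of_le (deg_pos' E hrefl u) (deg_le_Mdeg_left E u v)
    positivity
  have hdpos : ∀ u : V, (0:ℝ) < (deg E u : ℝ) := by
    intro u; exact_mod_cast deg_pos' E hrefl u
  have hgnonneg : ∀ u v r : V, 0 ≤ g u v r := by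
    intro u v r
    apply div_nonneg _ (le_of_lt (hMpos u v))
    have h1 : (0:ℝ) ≤ if r = u then (1:ℝ) else 0 := by positivity
    have h2 : (0:ℝ) ≤ if r = v then (1:ℝ) else 0 := by positivity
    linarith
  refine ⟨fun r => ∑ u ∈ U, ∑ v ∈ phi2p β E C u, g u v r, ?_, ?_, ?_, ?_⟩
  · intro r
    exact Finset.sum_nonneg fun u _ => Finset.sum_nonneg fun v _ => hgnonneg u v r
  · -- (a)
    have hswap : ∑ r : V, (∑ u ∈ U, ∑ v ∈ phi2p β E C u, g u v r) * (costC E C r : ℝ)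
        = ∑ u ∈ U, ∑ v ∈ phi2p β E C u,
            ((costC E C u : ℝ) + (costC E C v : ℝ)) / (β * (Mdeg E u v : ℝ)) := by
      simp only [Finset.sum_mul]
      rw [Finset.sum_comm]
      refine Finset.sum_congr rfl fun u _ => ?_
      rw [Finset.sum_comm]
      refine Finset.sum_congr rfl fun v _ => ?_
      have hrep : ∀ r : V, g u v r * (costC E C r : ℝ)
          = (if r = u then (costC E C r : ℝ) / (β * (Mdeg E u v : ℝ)) else 0)
            + (if r = v then (costC E C r : ℝ) / (β * (Mdeg E u v : ℝ)) else 0) := by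
        intro r
        by_cases h1 : r = u
        · subst h1
          by_cases h2 : r = v
          · subst h2
            simp [hg]
            ring
          · simp [hg, h2]
            ring
        · by_cases h2 : r = v
          · subst h2
            simp [hg, h1]
            ring
          · simp [hg, h1, h2]
      simp only [hrep, Finset.sum_add_distrib, Finset.sum_ite_eq', Finset.mem_univ, if_true]
      ring
    rw [hswap]
    refine Finset.sum_le_sum fun u _ => Finset.sum_le_sum fun v hv => ?_
    simp only [phi2p, Finset.mem_filter, Finset.mem_univ, true_and] at hv
    obtain ⟨hE, hnEH, hC⟩ := hv
    have hne : u ≠ v := by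
      rintro rfl
      exact not_mem_phi2p_self β hβ0 E hrefl C u
        (by simp [phi2p, hE, hnEH, hC])
    have hx1 : xval β E u v ≤ 1 := by
      rw [xval, if_neg hne]
      have hM : (0:ℝ) < (Mdeg E u v : ℝ) := by
        have : 0 < Mdeg E u v := lt_of_lt_of_le (deg_pos' E hrefl u) (deg_le_Mdeg_left E u v)
        exact_mod_cast this
      have : (0:ℝ) ≤ ((NH β E u ∩ NH β E v).card : ℝ) / (Mdeg E u v : ℝ) := by positivity
      linarith
    have hlt : β * (Mdeg E u v : ℝ) < ((symmDiff (Nbr E u) (Nbr E v)).card : ℝ) := by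
      by_contra h
      exact hnEH ⟨hE, le_of_not_gt h⟩
    have hcard : ((symmDiff (Nbr E u) (Nbr E v)).card : ℝ)
        ≤ (costC E C u : ℝ) + (costC E C v : ℝ) := by
      exact_mod_cast symmDiff_card_le_cost E hrefl C hC
    have h1le : (1:ℝ) ≤ ((costC E C u : ℝ) + (costC E C v : ℝ)) / (β * (Mdeg E u v : ℝ)) := by
      rw [le_div_iff₀ (hMpos u v)]
      linarith
    linarith
  · -- (b)
    intro r
    have hbound : ∀ u v : V, v ∈ phi2p β E C u →
        g u v r ≤ (if r = u then 1 / (β * (deg E r : ℝ)) else 0)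
          + (if r = v then 1 / (β * (deg E r : ℝ)) else 0) := by
      intro u v hv
      have hM : (0:ℝ) < β * (Mdeg E u v : ℝ) := hMpos u v
      have hd : (0:ℝ) < β * (deg E r : ℝ) := by
        have := hdpos r; positivity
      by_cases h1 : r = u <;> by_cases h2 : r = v
      · subst h1; subst h2
        exact absurd hv (not_mem_phi2p_self β hβ0 E hrefl C r)
      · subst h1
        have hMd : β * (deg E r : ℝ) ≤ β * (Mdeg E r v : ℝ) := by
          have := deg_le_Mdeg_left E r v
          have : (deg E r : ℝ) ≤ (Mdeg E r v : ℝ) := by exact_mod_cast this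
          nlinarith
        simp only [hg, if_pos rfl, if_neg h2, if_true, add_zero]
        rw [div_le_div_iff₀ (hMpos r v) hd]
        nlinarith
      · subst h2
        have hMd : β * (deg E r : ℝ) ≤ β * (Mdeg E u r : ℝ) := by
          have := deg_le_Mdeg_right E u r
          have : (deg E r : ℝ) ≤ (Mdeg E u r : ℝ) := by exact_mod_cast this
          nlinarith
        simp only [hg, if_neg h1, if_pos rfl, if_true, zero_add]
        rw [div_le_div_iff₀ (hMpos u r) hd]
        nlinarith
      · simp only [hg, if_neg h1, if_neg h2, add_zero, zero_div, le_refl]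
    have hd : (0:ℝ) < β * (deg E r : ℝ) := by
      have := hdpos r; positivity
    set t : ℝ := 1 / (β * (deg E r : ℝ)) with ht
    have htpos : 0 ≤ t := by positivity
    calc ∑ u ∈ U, ∑ v ∈ phi2p β E C u, g u v r
        ≤ ∑ u ∈ U, ∑ v ∈ phi2p β E C u,
            ((if r = u then t else 0) + (if r = v then t else 0)) :=
          Finset.sum_le_sum fun u _ => Finset.sum_le_sum fun v hv => hbound u v hv
      _ = (∑ u ∈ U, ∑ v ∈ phi2p β E C u, (if r = u then t else 0))
          + ∑ u ∈ U, ∑ v ∈ phi2p β E C u, (if r = v then t else 0) := by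
          simp [Finset.sum_add_distrib]
      _ ≤ ((phi2p β E C r).card : ℝ) * t + ((phi2p β E C r).card : ℝ) * t := by
          gcongr
          · -- first sum
            have : ∀ u ∈ U, (∑ v ∈ phi2p β E C u, (if r = u then t else 0))
                = if r = u then ((phi2p β E C u).card : ℝ) * t else 0 := by
              intro u _
              by_cases h : r = u <;> simp [h, Finset.sum_const, nsmul_eq_mul]
            rw [Finset.sum_congr rfl this, Finset.sum_ite_eq]
            by_cases h : r ∈ U <;> simp [h]
            positivity
          · -- second sum
            have hstep : ∀ u ∈ U, (∑ v ∈ phi2p β E C u, (if r = v then t else 0))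
                ≤ (if u ∈ phi2p β E C r then t else 0) := by
              intro u _
              rw [Finset.sum_ite_eq]
              by_cases h : r ∈ phi2p β E C u
              · rw [if_pos h, if_pos (phi2p_symm' β E hsymm C h)]
              · rw [if_neg h]
                split <;> simp [htpos]
            calc ∑ u ∈ U, ∑ v ∈ phi2p β E C u, (if r = v then t else 0)
                ≤ ∑ u ∈ U, (if u ∈ phi2p β E C r then t else 0) :=
                  Finset.sum_le_sum hstep
              _ ≤ ∑ u : V, (if u ∈ phi2p β E C r then t else 0) := by
                  apply Finset.sum_le_sum_of_subset_of_nonneg (Finset.subset_univ U)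
                  intro i _ _
                  split <;> simp [htpos]
              _ = ((phi2p β E C r).card : ℝ) * t := by
                  rw [Finset.sum_ite_mem, Finset.univ_inter, Finset.sum_const, nsmul_eq_mul]
      _ = (2 / β) * ((phi2p β E C r).card : ℝ) / (deg E r : ℝ) := by
          rw [ht]
          field_simp
          ring
  · -- (c)
    have hswap2 : ∑ r : V, ∑ u ∈ U, ∑ v ∈ phi2p β E C u, g u v r
        = ∑ u ∈ U, ∑ v ∈ phi2p β E C u, ∑ r : V, g u v r := by
      rw [Finset.sum_comm]
      exact Finset.sum_congr rfl fun u _ => Finset.sum_comm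
    rw [hswap2]
    have hinner : ∀ u ∈ U, ∑ v ∈ phi2p β E C u, ∑ r : V, g u v r
        ≤ (2 / β) * ((phi2p β E C u).card : ℝ) / (deg E u : ℝ) := by
      intro u _
      have hstep : ∀ v ∈ phi2p β E C u, ∑ r : V, g u v r ≤ 2 / (β * (deg E u : ℝ)) := by
        intro v hv
        have hne : u ≠ v := fun h => not_mem_phi2p_self β hβ0 E hrefl C u (h ▸ hv)
        have hsum : ∑ r : V, g u v r = 2 / (β * (Mdeg E u v : ℝ)) := by
          simp only [hg]
          rw [← Finset.sum_div, Finset.sum_add_distrib]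
          simp only [Finset.sum_ite_eq', Finset.mem_univ, if_true]
          norm_num
        rw [hsum]
        apply div_le_div_of_nonneg_left (by norm_num) (mul_pos hβ0 (hdpos u))
        have h1 : (deg E u : ℝ) ≤ (Mdeg E u v : ℝ) := by
          exact_mod_cast deg_le_Mdeg_left E u v
        nlinarith [hdpos u]
      calc ∑ v ∈ phi2p β E C u, ∑ r : V, g u v r
          ≤ ∑ v ∈ phi2p β E C u, 2 / (β * (deg E u : ℝ)) := Finset.sum_le_sum hstep
        _ = ((phi2p β E C u).card : ℝ) * (2 / (β * (deg E u : ℝ))) := by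
            rw [Finset.sum_const, nsmul_eq_mul]
        _ = (2 / β) * ((phi2p β E C u).card : ℝ) / (deg E u : ℝ) := by
            have := hdpos u
            field_simp
    calc ∑ u ∈ U, ∑ v ∈ phi2p β E C u, ∑ r : V, g u v r
        ≤ ∑ u ∈ U, (2 / β) * ((phi2p β E C u).card : ℝ) / (deg E u : ℝ) :=
          Finset.sum_le_sum hinner
      _ = (2 / β) * ∑ u ∈ U, ((phi2p β E C u).card : ℝ) / (deg E u : ℝ) := by
          rw [Finset.mul_sum]
          exact Finset.sum_congr rfl fun u _ => by ring

end
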